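/- arXiv:2203.01550 — 10 statements merged into one kernel-verified Lean document; each statement's English description precedes it below -/
import Mathlib

section
/- If H ⊆ Y^d is a d-dimensional pseudo-cube (a nonempty finite set such that every h ∈ H has, for each coordinate i ∈ [d], some g ∈ H with g(i) ≠ h(i) and g(j) = h(j) for all j ≠ i), then for every orientation σ of the one-inclusion graph of H, the maximum out-degree of σ is at least d/2. -/
open Finset
open scoped Classical

/-- A pseudo-cube of dimension `d` over label set `Y`: a nonempty finite set of words such
that every word has, in each coordinate, a neighbor differing exactly in that coordinate. -/
def IsPseudoCube {Y : Type*} {d : ℕ} (H : Set (Fin d → Y)) : Prop :=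
  H.Nonempty ∧ H.Finite ∧
    ∀ h ∈ H, ∀ i : Fin d, ∃ g ∈ H, g i ≠ h i ∧ ∀ j, j ≠ i → g j = h j

/-- An orientation of the one-inclusion graph of `H ⊆ Y^n`: for each direction `i` and each
vertex `h`, a chosen member `σ i h` of the edge in direction `i` through `h`; the choice
depends only on the edge (i.e., on `h` off coordinate `i`). -/
structure OIOrientation {Y : Type*} {n : ℕ} (H : Set (Fin n → Y)) where
  σ : Fin n → (Fin n → Y) → (Fin n → Y)
  mem_of_mem : ∀ (i : Fin n), ∀ h ∈ H, σ i h ∈ H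
  agree : ∀ (i : Fin n), ∀ h ∈ H, ∀ j, j ≠ i → σ i h j = h j
  consistent : ∀ (i : Fin n), ∀ g ∈ H, ∀ h ∈ H, (∀ j, j ≠ i → g j = h j) → σ i g = σ i h

/-- The out-degree of a vertex `v`: the number of edges containing `v` not oriented toward `v`. -/
noncomputable def outdeg {Y : Type*} {n : ℕ} {H : Set (Fin n → Y)}
    (o : OIOrientation H) (v : Fin n → Y) : ℕ :=
  (Finset.univ.filter (fun i : Fin n => o.σ i v ≠ v)).card

/-- The projection of a class `H ⊆ Y^X` to a sequence `S` of points. -/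
def proj {X Y : Type*} (H : Set (X → Y)) {k : ℕ} (S : Fin k → X) : Set (Fin k → Y) :=
  {w | ∃ h ∈ H, ∀ j, h (S j) = w j}

/-- `H` DS-shatters the sequence `S` if the projection `H|_S` contains a pseudo-cube. -/
def DSShatters {X Y : Type*} (H : Set (X → Y)) {k : ℕ} (S : Fin k → X) : Prop :=
  ∃ B ⊆ proj H S, IsPseudoCube B

/-- In a `d`-dimensional pseudo-cube, every orientation of the one-inclusion
graph has maximum out-degree at least `d/2`. -/
theorem pseudoCube_orientation_maxOutdeg_ge {Y : Type*} {d : ℕ} (H : Set (Fin d → Y))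
    (hH : IsPseudoCube H) (o : OIOrientation H) :
    ∃ v ∈ H, (d : ℚ) / 2 ≤ (outdeg o v : ℚ) := by

  classical
  obtain ⟨hne, hfin, hcube⟩ := hH
  set Hf := hfin.toFinset with hHfdef
  have hmem : ∀ v, v ∈ Hf ↔ v ∈ H := fun v => hfin.mem_toFinset
  have hHfne : Hf.Nonempty := by
    obtain ⟨x, hx⟩ := hne; exact ⟨x, (hmem x).2 hx⟩
  -- per-direction bound: at least half of the vertices have an outgoing edge in direction i
  have key : ∀ i : Fin d, Hf.card ≤ 2 * (Hf.filter (fun v => o.σ i v ≠ v)).card := by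
    intro i
    have hsplit : (Hf.filter (fun v => o.σ i v = v)).card
        + (Hf.filter (fun v => ¬ o.σ i v = v)).card = Hf.card :=
      Finset.card_filter_add_card_filter_not (fun v => o.σ i v = v)
    have hle : (Hf.filter (fun v => o.σ i v = v)).card
        ≤ (Hf.filter (fun v => ¬ o.σ i v = v)).card := by
      apply Finset.card_le_card_of_injOn
        (fun v => if h : v ∈ H then Classical.choose (hcube v h i) else v)
      · intro v hv
        have hvH : v ∈ H := (hmem v).1 (Finset.mem_filter.1 hv).1
        have hfix : o.σ i v = v := (Finset.mem_filter.1 hv).2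
        simp only [dif_pos hvH]
        obtain ⟨hgH, hgi, hgj⟩ := Classical.choose_spec (hcube v hvH i)
        set g := Classical.choose (hcube v hvH i) with hg
        have hσ : o.σ i g = o.σ i v := o.consistent i g hgH v hvH hgj
        refine Finset.mem_filter.2 ⟨(hmem g).2 hgH, ?_⟩
        rw [hσ, hfix]
        intro h
        exact hgi (congrFun h.symm i)
      · intro v hv w hw hvw
        have hvH : v ∈ H := (hmem v).1 (Finset.mem_filter.1 hv).1
        have hwH : w ∈ H := (hmem w).1 (Finset.mem_filter.1 hw).1
        simp only [dif_pos hvH, dif_pos hwH] at hvw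
        obtain ⟨_, _, hgjv⟩ := Classical.choose_spec (hcube v hvH i)
        obtain ⟨_, _, hgjw⟩ := Classical.choose_spec (hcube w hwH i)
        have hagree : ∀ j, j ≠ i → v j = w j := fun j hj => by
          rw [← hgjv j hj, hvw, hgjw j hj]
        have hc := o.consistent i v hvH w hwH hagree
        rw [(Finset.mem_filter.1 hv).2, (Finset.mem_filter.1 hw).2] at hc
        exact hc
    simp only [ne_eq]
    omega
  -- total outdegree count
  have hsum : d * Hf.card ≤ 2 * ∑ v ∈ Hf, outdeg o v := by
    have hswap : ∑ v ∈ Hf, outdeg o v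
        = ∑ i : Fin d, (Hf.filter (fun v => o.σ i v ≠ v)).card := by
      calc ∑ v ∈ Hf, outdeg o v
          = ∑ v ∈ Hf, ∑ i : Fin d, if o.σ i v ≠ v then 1 else 0 := by
            simp [outdeg, Finset.card_filter]
        _ = ∑ i : Fin d, ∑ v ∈ Hf, if o.σ i v ≠ v then 1 else 0 := Finset.sum_comm
        _ = ∑ i : Fin d, (Hf.filter (fun v => o.σ i v ≠ v)).card := by
            simp [Finset.card_filter]
    rw [hswap, Finset.mul_sum]
    calc d * Hf.card = ∑ _i : Fin d, Hf.card := by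
          simp [Finset.sum_const, mul_comm]
      _ ≤ ∑ i : Fin d, 2 * (Hf.filter (fun v => o.σ i v ≠ v)).card :=
          Finset.sum_le_sum (fun i _ => key i)
  -- conclude by averaging
  by_contra hcon
  push_neg at hcon
  have hlt : ∑ v ∈ Hf, (outdeg o v : ℚ) < ∑ _v ∈ Hf, (d : ℚ) / 2 := by
    apply Finset.sum_lt_sum_of_nonempty hHfne
    intro v hv
    exact hcon v ((hmem v).1 hv)
  have hcast : (d : ℚ) * Hf.card ≤ 2 * ∑ v ∈ Hf, (outdeg o v : ℚ) := by
    have := hsum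
    push_cast [← Nat.cast_sum]
    exact_mod_cast this
  rw [Finset.sum_const, nsmul_eq_mul] at hlt
  have : (d : ℚ) * Hf.card < (d : ℚ) * Hf.card := by
    calc (d : ℚ) * Hf.card ≤ 2 * ∑ v ∈ Hf, (outdeg o v : ℚ) := hcast
      _ < 2 * (Hf.card * ((d : ℚ) / 2)) := by linarith
      _ = (d : ℚ) * Hf.card := by ring
  exact lt_irrefl _ this
end

section
/- For every class H ⊆ [p]^n and every coordinate i ∈ [n], the shifting operator in direction i does not increase the size of projections: for every sequence S of coordinates, |S_i(H)|_S| ≤ |H|_S|. -/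
open Finset

/-- The edge of the one-inclusion graph of `H ⊆ [p]^n` in direction `i` through `g`:
all members of `H` agreeing with `g` off coordinate `i`. -/
def edgeF {n p : ℕ} (H : Finset (Fin n → Fin p)) (i : Fin n) (g : Fin n → Fin p) :
    Finset (Fin n → Fin p) :=
  H.filter (fun h => ∀ j, j ≠ i → h j = g j)

/-- The shifting operator in direction `i`: each edge is pushed downward, i.e. replaced by
the words agreeing with its pattern off `i` whose `i`-th coordinate is among the
`|e|` smallest values. -/
def shift {n p : ℕ} (i : Fin n) (H : Finset (Fin n → Fin p)) : Finset (Fin n → Fin p) :=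
  Finset.univ.filter (fun g => (g i).val < (edgeF H i g).card)

/-- The projection of `H` to a sequence `S` of coordinates. -/
def projF {n p k : ℕ} (H : Finset (Fin n → Fin p)) (S : Fin k → Fin n) :
    Finset (Fin k → Fin p) :=
  H.image (fun h => fun j => h (S j))

/-- `H` E-shatters size `k` if some sequence of `k` coordinates has projection of size `≥ 2^k`. -/
def EShatters {n p : ℕ} (H : Finset (Fin n → Fin p)) (k : ℕ) : Prop :=
  ∃ S : Fin k → Fin n, 2 ^ k ≤ (projF H S).card

/-- The exponential dimension: the largest `k` that `H` E-shatters. -/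
noncomputable def dE {n p : ℕ} (H : Finset (Fin n → Fin p)) : ℕ :=
  sSup {k | EShatters H k}

/-- The number of edges of the one-inclusion graph of `H` in direction `j`
(equivalently, the number of distinct patterns of `H` off coordinate `j`). -/
def numEdges {n p : ℕ} (H : Finset (Fin n → Fin p)) (j : Fin n) : ℕ :=
  (H.image (fun h => fun k : {k : Fin n // k ≠ j} => h k.1)).card

/-- `avd'(H) = (1/|H|) Σ_{e ∈ E} (|e| − 1)`, over all edges including singletons. -/
def avd' {n p : ℕ} (H : Finset (Fin n → Fin p)) : ℚ :=
  (∑ j : Fin n, ((H.card : ℚ) - (numEdges H j : ℚ))) / (H.card : ℚ)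

/-- The degree of `v`: the number of non-singleton edges of the one-inclusion graph
containing `v`. -/
def deg {n p : ℕ} (H : Finset (Fin n → Fin p)) (v : Fin n → Fin p) : ℕ :=
  (Finset.univ.filter (fun j : Fin n => 2 ≤ (edgeF H j v).card)).card

/-- The average degree of the one-inclusion graph of `H`. -/
def avd {n p : ℕ} (H : Finset (Fin n → Fin p)) : ℚ :=
  (∑ v ∈ H, (deg H v : ℚ)) / (H.card : ℚ)

/-!
If no entry of `S` is `i`, every word of `S_i(H)` agrees off `i` with a word of `H`, so
`S_i(H)|_S ⊆ H|_S`. Otherwise, say `S j₀ = i`, split both projections according to the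
pattern `f` on the positions `j` with `S j ≠ i`. A word of the fibre of `S_i(H)|_S` over `f`
is determined by its value at `j₀`, which lies below `|e_g|` for some `g` of pattern `f`;
and the projection of any such edge `e_g` embeds into the fibre of `H|_S` over `f`, because
`j₀` records the one coordinate on which the members of `e_g` differ.
-/

lemma card_le_card_of_forall_card_fiber_le {α β : Type*} [DecidableEq β] [Fintype β]
    {s t : Finset α} (φ : α → β)
    (h : ∀ b, (s.filter (φ · = b)).card ≤ (t.filter (φ · = b)).card) : s.card ≤ t.card := by
  rw [card_eq_sum_card_fiberwise (f := φ) (t := univ) fun _ _ => mem_univ _,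
    card_eq_sum_card_fiberwise (f := φ) (t := univ) fun _ _ => mem_univ _]
  exact sum_le_sum fun b _ => h b

variable {n p k : ℕ}

lemma edgeF_nonempty_of_mem_shift {H : Finset (Fin n → Fin p)} {i : Fin n}
    {g : Fin n → Fin p} (hg : g ∈ shift i H) : (edgeF H i g).Nonempty :=
  card_pos.mp (Nat.zero_lt_of_lt (mem_filter.mp hg).2)

lemma projF_shift_subset_of_forall_ne {H : Finset (Fin n → Fin p)} {i : Fin n}
    {S : Fin k → Fin n} (hi : ∀ j, S j ≠ i) : projF (shift i H) S ⊆ projF H S := by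
  intro q hq
  obtain ⟨g, hg, rfl⟩ := mem_image.mp hq
  obtain ⟨h, hh⟩ := edgeF_nonempty_of_mem_shift hg
  obtain ⟨hH, hhg⟩ := mem_filter.mp hh
  exact mem_image.mpr ⟨h, hH, funext fun j => hhg (S j) (hi j)⟩

lemma apply_eq_apply_of_mem_projF {X : Finset (Fin n → Fin p)} {S : Fin k → Fin n}
    {q : Fin k → Fin p} (hq : q ∈ projF X S) {j j' : Fin k} (h : S j = S j') : q j = q j' := by
  obtain ⟨g, -, rfl⟩ := mem_image.mp hq
  exact congrArg g h

def offPattern (S : Fin k → Fin n) (i : Fin n) (q : Fin k → Fin p) :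
    {j // S j ≠ i} → Fin p :=
  fun j => q j

lemma eq_of_offPattern_eq_of_apply_eq {X Y : Finset (Fin n → Fin p)} {S : Fin k → Fin n}
    {i : Fin n} {j₀ : Fin k} (hj₀ : S j₀ = i) {q q' : Fin k → Fin p} (hq : q ∈ projF X S)
    (hq' : q' ∈ projF Y S) (hpat : offPattern S i q = offPattern S i q') (h₀ : q j₀ = q' j₀) :
    q = q' := by
  funext j
  by_cases hj : S j = i
  · rw [apply_eq_apply_of_mem_projF hq (hj.trans hj₀.symm),
      apply_eq_apply_of_mem_projF hq' (hj.trans hj₀.symm), h₀]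
  · exact congrFun hpat ⟨j, hj⟩

lemma card_projF_shift_fiber_le (H : Finset (Fin n → Fin p))
    {i : Fin n} {S : Fin k → Fin n} {j₀ : Fin k} (hj₀ : S j₀ = i) (f : {j // S j ≠ i} → Fin p) :
    ((projF (shift i H) S).filter (offPattern S i · = f)).card ≤
      (univ.filter fun g : Fin n → Fin p => offPattern S i (fun j => g (S j)) = f).sup
        fun g => (edgeF H i g).card := by
  refine (card_le_card_of_injOn (fun q => (q j₀ : ℕ)) ?_ ?_).trans (card_range _).le
  · intro q hq
    obtain ⟨hqX, rfl⟩ := mem_filter.mp hq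
    obtain ⟨g, hg, rfl⟩ := mem_image.mp hqX
    have hgi : (g i : ℕ) < (edgeF H i g).card := (mem_filter.mp hg).2
    refine mem_range.mpr (lt_of_lt_of_le ?_ (le_sup (f := fun g => (edgeF H i g).card)
      (mem_filter.mpr ⟨mem_univ g, rfl⟩)))
    simpa only [hj₀] using hgi
  · intro q hq q' hq' h
    obtain ⟨hq, hqf⟩ := mem_filter.mp hq
    obtain ⟨hq', hq'f⟩ := mem_filter.mp hq'
    exact eq_of_offPattern_eq_of_apply_eq hj₀ hq hq' (hqf.trans hq'f.symm) (Fin.ext h)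

lemma card_edgeF_le_card_projF_fiber (H : Finset (Fin n → Fin p))
    {i : Fin n} {S : Fin k → Fin n} {j₀ : Fin k} (hj₀ : S j₀ = i) {g : Fin n → Fin p}
    {f : {j // S j ≠ i} → Fin p} (hg : offPattern S i (fun j => g (S j)) = f) :
    (edgeF H i g).card ≤ ((projF H S).filter (offPattern S i · = f)).card := by
  refine card_le_card_of_injOn (fun h j => h (S j)) ?_ ?_
  · intro h hh
    obtain ⟨hH, hhg⟩ := mem_filter.mp hh
    refine mem_filter.mpr ⟨mem_image_of_mem _ hH, hg ▸ ?_⟩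
    funext j
    exact hhg (S j) j.2
  · intro h hh h' hh' hhh'
    funext m
    by_cases hm : m = i
    · subst hm
      simpa only [hj₀] using congrFun hhh' j₀
    · rw [(mem_filter.mp hh).2 m hm, (mem_filter.mp hh').2 m hm]

/-- Shifting in direction `i` does not increase the size of any projection. -/
theorem shift_proj_card_le {n p k : ℕ} (H : Finset (Fin n → Fin p)) (i : Fin n)
    (S : Fin k → Fin n) :
    (projF (shift i H) S).card ≤ (projF H S).card := by
  classical
  by_cases hi : ∃ j₀, S j₀ = i
  · obtain ⟨j₀, hj₀⟩ := hi
    refine card_le_card_of_forall_card_fiber_le (offPattern S i) fun f => ?_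
    exact (card_projF_shift_fiber_le H hj₀ f).trans
      (Finset.sup_le fun g hg => card_edgeF_le_card_projF_fiber H hj₀ (mem_filter.mp hg).2)
  · exact card_le_card (projF_shift_subset_of_forall_ne (not_exists.mp hi))
end

section
/- For every H ⊆ [p]^n and i ∈ [n], the quantity avd'(H) = (1/|H|) Σ_{e ∈ E} (|e| − 1), summed over all edges e of the one-inclusion graph (including singleton edges), does not decrease under shifting: avd'(S_i(H)) ≥ avd'(H). -/
open Finset

/-!
Since `|S_i(H)| = |H|`, it suffices that shifting does not increase the number of edges in
any direction `j`. For `j = i` every pattern off `i` occurring in `S_i(H)` already occurs in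
`H`. For `j ≠ i`, fix the coordinates off `{i, j}`; in this two-dimensional slice the edges in
direction `j` correspond to the values taken by coordinate `i`. After shifting these values
form an initial segment whose length is the largest size `|e|` of an `i`-edge of the slice,
while in `H` that largest edge alone already contributes `|e|` distinct values.
-/

section restrictOff

variable {α β : Type*}

def restrictOff (i : α) (g : α → β) : {k // k ≠ i} → β := fun k => g k

theorem restrictOff_eq_restrictOff_iff {i : α} {g h : α → β} :
    restrictOff i g = restrictOff i h ↔ ∀ k, k ≠ i → g k = h k :=
  ⟨fun e k hk => congrFun e ⟨k, hk⟩, fun e => funext fun k => e k k.2⟩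

theorem eq_of_restrictOff_eq_of_apply_eq {i : α} {g h : α → β}
    (hr : restrictOff i g = restrictOff i h) (hi : g i = h i) : g = h := by
  funext k
  by_cases hk : k = i
  · exact hk ▸ hi
  · exact restrictOff_eq_restrictOff_iff.1 hr k hk

theorem injOn_eval_of_restrictOff_eq {s : Finset (α → β)} {i : α} {q : {k // k ≠ i} → β}
    (hs : ∀ g ∈ s, restrictOff i g = q) : Set.InjOn (fun g : α → β => g i) s :=
  fun _ hg _ hh e => eq_of_restrictOff_eq_of_apply_eq ((hs _ hg).trans (hs _ hh).symm) e

def restrictOffPair {i j : α} (hij : i ≠ j) (g : α → β) :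
    {k : {k // k ≠ j} // k ≠ ⟨i, hij⟩} → β :=
  restrictOff ⟨i, hij⟩ (restrictOff j g)

theorem restrictOffPair_eq_of_restrictOff_eq {i j : α} (hij : i ≠ j) {g h : α → β}
    (e : restrictOff i g = restrictOff i h) : restrictOffPair hij g = restrictOffPair hij h :=
  restrictOff_eq_restrictOff_iff.2 fun k hk =>
    restrictOff_eq_restrictOff_iff.1 e k fun hki => hk (Subtype.ext hki)

variable [DecidableEq α]

theorem piSplitAt_symm_apply_self (i : α) (a : β) (q : {k // k ≠ i} → β) :
    (Equiv.piSplitAt i fun _ => β).symm (a, q) i = a :=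
  congrArg Prod.fst ((Equiv.piSplitAt i fun _ => β).apply_symm_apply (a, q))

theorem restrictOff_piSplitAt_symm (i : α) (a : β) (q : {k // k ≠ i} → β) :
    restrictOff i ((Equiv.piSplitAt i fun _ => β).symm (a, q)) = q :=
  congrArg Prod.snd ((Equiv.piSplitAt i fun _ => β).apply_symm_apply (a, q))

variable [DecidableEq β] [Fintype α] [Fintype β]

theorem card_eq_sum_card_image_eval (s : Finset (α → β)) (i : α) :
    s.card = ∑ q, ((s.filter (restrictOff i · = q)).image (fun g => g i)).card := by
  rw [card_eq_sum_card_fiberwise (f := restrictOff i) (t := univ) fun _ _ => mem_univ _]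
  refine sum_congr rfl fun q _ => (card_image_of_injOn ?_).symm
  exact injOn_eval_of_restrictOff_eq fun g hg => (mem_filter.1 hg).2

theorem card_fiber_restrictOff_le (s : Finset (α → β)) (i : α) (q : {k // k ≠ i} → β) :
    (s.filter (restrictOff i · = q)).card ≤ Fintype.card β := by
  rw [← card_image_of_injOn (injOn_eval_of_restrictOff_eq fun g hg => (mem_filter.1 hg).2)]
  exact card_le_univ _

end restrictOff

section shift

variable {n p : ℕ} {H : Finset (Fin n → Fin p)} {i : Fin n} {g : Fin n → Fin p}

theorem edgeF_eq_filter_restrictOff :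
    edgeF H i g = H.filter (restrictOff i · = restrictOff i g) := by
  simp only [edgeF, restrictOff_eq_restrictOff_iff]

theorem mem_shift : g ∈ shift i H ↔ (g i : ℕ) < (edgeF H i g).card := by
  simp [shift]

-- Under `Fin n → Fin p ≃ Fin p × ({k // k ≠ i} → Fin p)`, the shift keeps, over each
-- pattern `q` off `i`, the first `|e_q|` values of coordinate `i`.
theorem card_shift (H : Finset (Fin n → Fin p)) (i : Fin n) : (shift i H).card = H.card := by
  let c : ({k // k ≠ i} → Fin p) → ℕ := fun q => (H.filter (restrictOff i · = q)).card
  calc (shift i H).card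
      = ∑ q, (univ.filter fun a : Fin p => (a : ℕ) < c q).card := by
        rw [shift, card_filter, ← (Equiv.piSplitAt i fun _ => Fin p).symm.sum_comp,
          Fintype.sum_prod_type_right]
        refine sum_congr rfl fun q _ => ?_
        rw [card_filter]
        refine sum_congr rfl fun a _ => ?_
        rw [edgeF_eq_filter_restrictOff, restrictOff_piSplitAt_symm, piSplitAt_symm_apply_self]
    _ = ∑ q, c q := sum_congr rfl fun q _ => by
        rw [Fin.card_filter_val_lt, min_eq_right (by simpa using card_fiber_restrictOff_le H i q)]
    _ = H.card := (card_eq_sum_card_fiberwise fun _ _ => mem_univ _).symm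

theorem image_restrictOff_shift_subset :
    (shift i H).image (restrictOff i) ⊆ H.image (restrictOff i) := by
  intro q hq
  obtain ⟨g, hg, rfl⟩ := mem_image.1 hq
  obtain ⟨h, hh⟩ := card_pos.1 (Nat.zero_lt_of_lt (mem_shift.1 hg))
  rw [edgeF_eq_filter_restrictOff, mem_filter] at hh
  exact mem_image.2 ⟨h, hh⟩

end shift

section slice

variable {n p : ℕ} {i j : Fin n}

theorem numEdges_eq_sum_card_slice (A : Finset (Fin n → Fin p)) (hij : i ≠ j) :
    numEdges A j = ∑ q, ((A.filter (restrictOffPair hij · = q)).image (fun g => g i)).card := by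
  change (A.image (restrictOff j)).card = _
  rw [card_eq_sum_card_image_eval _ ⟨i, hij⟩]
  refine sum_congr rfl fun q _ => ?_
  rw [filter_image, image_image]
  rfl

theorem card_slice_shift_le (H : Finset (Fin n → Fin p)) (hij : i ≠ j)
    (q : {k : {k // k ≠ j} // k ≠ ⟨i, hij⟩} → Fin p) :
    (((shift i H).filter (restrictOffPair hij · = q)).image (fun g => g i)).card ≤
    ((H.filter (restrictOffPair hij · = q)).image (fun g => g i)).card := by
  set T := (shift i H).filter (restrictOffPair hij · = q)
  rcases T.eq_empty_or_nonempty with hT | hT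
  · simp [hT]
  obtain ⟨g₀, hg₀, hmax⟩ := exists_max_image T (fun g => (edgeF H i g).card) hT
  have hedge : edgeF H i g₀ ⊆ H.filter (restrictOffPair hij · = q) := by
    intro h hh
    rw [edgeF_eq_filter_restrictOff, mem_filter] at hh
    exact mem_filter.2
      ⟨hh.1, (restrictOffPair_eq_of_restrictOff_eq hij hh.2).trans (mem_filter.1 hg₀).2⟩
  calc (T.image fun g => g i).card
      ≤ (univ.filter fun a : Fin p => (a : ℕ) < (edgeF H i g₀).card).card := by
        refine card_le_card fun a ha => ?_
        obtain ⟨g, hg, rfl⟩ := mem_image.1 ha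
        exact mem_filter.2 ⟨mem_univ _,
          (mem_shift.1 (mem_filter.1 hg).1).trans_le (hmax g hg)⟩
    _ ≤ (edgeF H i g₀).card := Fin.card_filter_val_lt.trans_le (min_le_right _ _)
    _ = ((edgeF H i g₀).image fun g => g i).card := by
        rw [edgeF_eq_filter_restrictOff, card_image_of_injOn]
        exact injOn_eval_of_restrictOff_eq fun h hh => (mem_filter.1 hh).2
    _ ≤ _ := card_le_card (image_subset_image hedge)

theorem numEdges_shift_le (H : Finset (Fin n → Fin p)) (i j : Fin n) :
    numEdges (shift i H) j ≤ numEdges H j := by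
  by_cases hij : i = j
  · subst hij
    exact card_le_card image_restrictOff_shift_subset
  · rw [numEdges_eq_sum_card_slice _ hij, numEdges_eq_sum_card_slice _ hij]
    exact sum_le_sum fun q _ => card_slice_shift_le H hij q

end slice

/-- The quantity `avd'` does not decrease under shifting. -/
theorem avd'_le_avd'_shift {n p : ℕ} (H : Finset (Fin n → Fin p)) (i : Fin n) :
    avd' H ≤ avd' (shift i H) := by
  rw [avd', avd', card_shift]
  gcongr with j
  exact numEdges_shift_le H i j
end

section
/- Let H_* ⊆ [p]^n be nonempty, finite and downward closed (with respect to the coordinatewise order on [p]^n with p ≥ 1, where [p] = {1,…,p} is ordered as usual). Then the average degree of H_* in its one-inclusion graph satisfies avd(H_*) ≤ 2·d_E(H_*), where d_E is the exponential dimension. -/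
open Finset

/-!
Fix a direction `j` and a line of `H` in direction `j` with `m ≥ 2` points. Each of its points
gets one unit of degree from it, while at least `m - 1` of them have a nonzero `j`-th
coordinate; as `m ≤ 2 (m - 1)`, the degree sum of any `H` is at most twice `∑_{v ∈ H} |v|`,
where `|v|` counts the nonzero coordinates of `v`. If `H` is downward closed, the `2^|v|` words
below `v` obtained by zeroing some coordinates of `v` have distinct projections to the
coordinates where `v` is nonzero, so `|v| ≤ d_E(H)`.
-/

namespace OneInclusion

variable {n p : ℕ}

lemma mem_edgeF {H : Finset (Fin n → Fin p)} {i : Fin n} {g h : Fin n → Fin p} :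
    h ∈ edgeF H i g ↔ h ∈ H ∧ ∀ j, j ≠ i → h j = g j :=
  mem_filter

lemma le_dE {H : Finset (Fin n → Fin p)} {k : ℕ} (hk : EShatters H k) : k ≤ dE H := by
  refine le_csSup ⟨#H, fun m ⟨S, hS⟩ => ?_⟩ hk
  exact ((Nat.lt_two_pow_self (n := m)).trans_le (hS.trans card_image_le)).le

lemma sum_card_filter_comm {α β : Type*} [Fintype β] (s : Finset α) (P : β → α → Prop)
    [∀ b a, Decidable (P b a)] :
    ∑ a ∈ s, #(univ.filter fun b => P b a) = ∑ b, #(s.filter (P b)) := by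
  simp only [card_filter]
  exact sum_comm

/-- Values are shifted by one from the paper's `[p]`, so `#(support v)` is the paper's `|v|`. -/
def support (v : Fin n → Fin p) : Finset (Fin n) :=
  univ.filter fun j => (v j).val ≠ 0

def truncate (v : Fin n → Fin p) (t : Finset (Fin n)) : Fin n → Fin p :=
  fun j => if j ∈ t then v j else ⟨0, (v j).pos⟩

lemma truncate_le (v : Fin n → Fin p) (t : Finset (Fin n)) : truncate v t ≤ v := fun j => by
  unfold truncate
  split_ifs
  exacts [le_rfl, Fin.le_iff_val_le_val.2 (Nat.zero_le _)]

lemma truncate_apply_ne_zero_iff {v : Fin n → Fin p} {t : Finset (Fin n)} {j : Fin n}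
    (hj : j ∈ support v) : (truncate v t j).val ≠ 0 ↔ j ∈ t := by
  by_cases hjt : j ∈ t <;> simp_all [truncate, support]

lemma eq_of_truncate_eqOn_support {v : Fin n → Fin p} {t t' : Finset (Fin n)}
    (ht : t ⊆ support v) (ht' : t' ⊆ support v)
    (h : ∀ j ∈ support v, truncate v t j = truncate v t' j) : t = t' := by
  ext j
  by_cases hj : j ∈ support v
  · rw [← truncate_apply_ne_zero_iff hj, ← truncate_apply_ne_zero_iff hj, h j hj]
  · exact iff_of_false (fun h => hj (ht h)) (fun h => hj (ht' h))

theorem eShatters_card_support {H : Finset (Fin n → Fin p)}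
    (hH : IsLowerSet (H : Set (Fin n → Fin p))) {v : Fin n → Fin p} (hv : v ∈ H) :
    EShatters H #(support v) := by
  set s := support v
  let S : Fin #s → Fin n := fun i => s.equivFin.symm i
  have hS : ∀ j (hj : j ∈ s), S (s.equivFin ⟨j, hj⟩) = j := fun j hj => by simp [S]
  let f : Finset (Fin n) → Fin #s → Fin p := fun t i => truncate v t (S i)
  refine ⟨S, ?_⟩
  calc 2 ^ #s = #(s.powerset.image f) := by
        rw [card_image_of_injOn, card_powerset]
        intro t ht t' ht' hf
        refine eq_of_truncate_eqOn_support (mem_powerset.1 ht) (mem_powerset.1 ht')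
          fun j hj => ?_
        simpa [f, hS j hj] using congrFun hf (s.equivFin ⟨j, hj⟩)
    _ ≤ #(projF H S) := card_le_card <| image_subset_iff.2 fun t _ =>
        mem_image.2 ⟨truncate v t, hH (truncate_le v t) hv, rfl⟩

-- Lowering the `j`-th coordinate to `0` is onto: such a `v` has a neighbour in direction `j`.
lemma card_filter_two_le_edgeF_and_eq_zero_le (H : Finset (Fin n → Fin p)) (j : Fin n) :
    #(H.filter fun v => 2 ≤ #(edgeF H j v) ∧ (v j).val = 0) ≤
      #(H.filter fun v => (v j).val ≠ 0) := by
  refine card_le_card_of_surjOn (fun w => Function.update w j ⟨0, (w j).pos⟩) ?_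
  intro v hv
  obtain ⟨-, hedge, hvj⟩ := mem_filter.1 hv
  obtain ⟨w, hw, hwv⟩ := exists_mem_ne hedge v
  obtain ⟨hwH, hwv_off⟩ := mem_edgeF.1 hw
  have hwj : (w j).val ≠ 0 := fun hwj => hwv <| funext fun i =>
    if hi : i = j then hi ▸ Fin.ext (hwj.trans hvj.symm) else hwv_off i hi
  refine ⟨w, mem_filter.2 ⟨hwH, hwj⟩, funext fun i => ?_⟩
  by_cases hi : i = j
  · subst hi
    simp [Fin.ext_iff, hvj]
  · simp [Function.update_of_ne hi, hwv_off i hi]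

lemma card_filter_two_le_edgeF_le (H : Finset (Fin n → Fin p)) (j : Fin n) :
    #(H.filter fun v => 2 ≤ #(edgeF H j v)) ≤ 2 * #(H.filter fun v => (v j).val ≠ 0) := by
  rw [← card_filter_add_card_filter_not (s := H.filter _) (fun v => (v j).val = 0),
    filter_filter, filter_filter]
  have hzero := card_filter_two_le_edgeF_and_eq_zero_le H j
  have hne : #(H.filter fun v => 2 ≤ #(edgeF H j v) ∧ ¬(v j).val = 0) ≤
      #(H.filter fun v => (v j).val ≠ 0) :=
    card_le_card <| monotone_filter_right H fun _ _ => And.right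
  omega

theorem sum_deg_le_two_mul_sum_card_support (H : Finset (Fin n → Fin p)) :
    ∑ v ∈ H, deg H v ≤ 2 * ∑ v ∈ H, #(support v) := by
  calc ∑ v ∈ H, deg H v = ∑ j, #(H.filter fun v => 2 ≤ #(edgeF H j v)) :=
        sum_card_filter_comm H fun j v => 2 ≤ #(edgeF H j v)
    _ ≤ ∑ j, 2 * #(H.filter fun v => (v j).val ≠ 0) :=
        sum_le_sum fun j _ => card_filter_two_le_edgeF_le H j
    _ = 2 * ∑ v ∈ H, #(support v) := by
        rw [← mul_sum]
        exact congrArg (2 * ·) (sum_card_filter_comm H fun j v => (v j).val ≠ 0).symm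

end OneInclusion

open OneInclusion in
theorem avd_le_two_dE_of_downwardClosed_general {n p : ℕ} (H : Finset (Fin n → Fin p))
    (hdc : ∀ h ∈ H, ∀ g : Fin n → Fin p, (∀ i, g i ≤ h i) → g ∈ H) :
    avd H ≤ 2 * (dE H : ℚ) := by
  have hlower : IsLowerSet (H : Set (Fin n → Fin p)) := fun h g hgh hh => hdc h hh g hgh
  have hsum : ∑ v ∈ H, deg H v ≤ 2 * dE H * #H :=
    calc ∑ v ∈ H, deg H v ≤ 2 * ∑ v ∈ H, #(support v) := sum_deg_le_two_mul_sum_card_support H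
      _ ≤ 2 * ∑ _v ∈ H, dE H := by
          gcongr with v hv
          exact le_dE (eShatters_card_support hlower hv)
      _ = 2 * dE H * #H := by rw [sum_const, smul_eq_mul]; ring
  refine div_le_of_le_mul₀ (by positivity) (by positivity) ?_
  exact_mod_cast hsum

/-- A nonempty downward-closed class `H_* ⊆ [p]^n` has average degree at most
twice its exponential dimension. -/
theorem avd_le_two_dE_of_downwardClosed {n p : ℕ} (H : Finset (Fin n → Fin p))
    (hne : H.Nonempty)
    (hdc : ∀ h ∈ H, ∀ g : Fin n → Fin p, (∀ i, g i ≤ h i) → g ∈ H) :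
    avd H ≤ 2 * (dE H : ℚ) :=
  avd_le_two_dE_of_downwardClosed_general H hdc
end

section
/- For every finite H ⊆ [p]^n, the average degree of the one-inclusion graph of H is at most 4 times the exponential dimension: avd(H) ≤ 4·d_E(H). -/
open Finset

/-!
Write `edgeExcess H = Σ_e (|e| - 1) = |H| · avd' H`. Every vertex of a non-singleton edge `e`
is charged `|e| ≤ 2 (|e| - 1)`, so `avd ≤ 2 avd'`, and it remains to show
`edgeExcess H ≤ d_E(H) · |H|`, by induction on `n`.

Split off the last coordinate and let `U_r ⊆ [p]^(n-1)` be the set of prefixes with more than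
`r` extensions in `H`. The layers `U_r` have total size `|H|`; the edges of `H` in the other
directions contain the edges of all layers side by side; the edges in the last direction
contribute `|H| - |U_0| = Σ_{r ≥ 1} |U_r|`. Finally `d_E(U_r) ≤ d_E(H)`, and for `r ≥ 1` even
`d_E(U_r) < d_E(H)`, because each pattern of `U_r` extends in two ways in the last coordinate;
this pays for the extra `|U_r|`.
-/

theorem Finset.sum_range_card_filter_lt {α : Type*} (s : Finset α) (c : α → ℕ) (N : ℕ) :
    ∑ r ∈ range N, #{x ∈ s | r < c x} = ∑ x ∈ s, min (c x) N := by
  simp_rw [card_filter]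
  rw [sum_comm]
  refine sum_congr rfl fun x _ => ?_
  rw [← card_filter, show {r ∈ range N | r < c x} = range (min (c x) N) by ext; simp; omega,
    card_range]

section OneInclusionGraph

variable {n p : ℕ}

lemma edgeF_eq_filter_restrict (H : Finset (Fin n → Fin p)) (j : Fin n) (v : Fin n → Fin p) :
    edgeF H j v = {h ∈ H | Subtype.restrict (· ≠ j) h = Subtype.restrict (· ≠ j) v} :=
  filter_congr fun _ _ =>
    ⟨fun hh => funext fun k => hh k k.2, fun hh k hk => congrFun hh ⟨k, hk⟩⟩

lemma numEdges_eq_card_image_restrict (H : Finset (Fin n → Fin p)) (j : Fin n) :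
    numEdges H j = #(H.image (Subtype.restrict (· ≠ j))) :=
  rfl

/-- An edge of size `m ≥ 2` contributes `m` to the degree count and `m - 1 ≥ m / 2` to the
edge excess. -/
lemma card_nonsingleton_add_two_mul_numEdges_le (H : Finset (Fin n → Fin p)) (j : Fin n) :
    #{v ∈ H | 2 ≤ #(edgeF H j v)} + 2 * numEdges H j ≤ 2 * #H := by
  set f := Subtype.restrict (α := Fin n) (β := fun _ => Fin p) (· ≠ j)
  set T := {v ∈ H | 2 ≤ #(edgeF H j v)}
  set S := {v ∈ H | ¬ 2 ≤ #(edgeF H j v)}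
  have hST : #T + #S = #H := card_filter_add_card_filter_not _
  have hsplit : numEdges H j ≤ #(T.image f) + #S := by
    rw [numEdges_eq_card_image_restrict,
      ← filter_union_filter_not_eq (fun v => 2 ≤ #(edgeF H j v)) H, image_union]
    exact (card_union_le _ _).trans (Nat.add_le_add_left card_image_le _)
  have hfibres : 2 * #(T.image f) ≤ #T := by
    refine mul_card_image_le_card T 2 fun b hb => ?_
    obtain ⟨v, hv, rfl⟩ := mem_image.mp hb
    refine (mem_filter.mp hv).2.trans (card_le_card fun h hh => ?_)
    rw [edgeF_eq_filter_restrict, mem_filter] at hh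
    refine mem_filter.mpr ⟨mem_filter.mpr ⟨hh.1, ?_⟩, hh.2⟩
    rw [edgeF_eq_filter_restrict, hh.2, ← edgeF_eq_filter_restrict]
    exact (mem_filter.mp hv).2
  omega

/-- `Σ_e (|e| - 1)` over all edges `e`, singletons included; thus `avd' H = edgeExcess H / |H|`. -/
def edgeExcess (H : Finset (Fin n → Fin p)) : ℚ :=
  ∑ j : Fin n, ((#H : ℚ) - numEdges H j)

lemma sum_deg_le_two_mul_edgeExcess (H : Finset (Fin n → Fin p)) :
    ∑ v ∈ H, (deg H v : ℚ) ≤ 2 * edgeExcess H := by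
  have hswap : ∑ v ∈ H, deg H v = ∑ j : Fin n, #{v ∈ H | 2 ≤ #(edgeF H j v)} :=
    sum_card_bipartiteAbove_eq_sum_card_bipartiteBelow (fun v j => 2 ≤ #(edgeF H j v))
  rw [edgeExcess, mul_sum, ← Nat.cast_sum, hswap, Nat.cast_sum]
  refine sum_le_sum fun j _ => ?_
  have hj : (#{v ∈ H | 2 ≤ #(edgeF H j v)} : ℚ) + 2 * numEdges H j ≤ 2 * #H := by
    exact_mod_cast card_nonsingleton_add_two_mul_numEdges_le H j
  linarith

lemma avd_le_two_mul_avd' (H : Finset (Fin n → Fin p)) : avd H ≤ 2 * avd' H := by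
  rw [avd, avd', ← mul_div_assoc]
  exact div_le_div_of_nonneg_right (sum_deg_le_two_mul_edgeExcess H) (Nat.cast_nonneg _)

end OneInclusionGraph

theorem Fin.eq_of_init_eq_of_last_eq {n : ℕ} {α : Type*} {g h : Fin (n + 1) → α}
    (hinit : Fin.init g = Fin.init h) (hlast : g (Fin.last n) = h (Fin.last n)) : g = h := by
  rw [← Fin.snoc_init_self g, ← Fin.snoc_init_self h, hinit, hlast]

section Layers

variable {n p : ℕ}

def fiberCard (H : Finset (Fin (n + 1) → Fin p)) (u : Fin n → Fin p) : ℕ :=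
  #{h ∈ H | Fin.init h = u}

def layer (H : Finset (Fin (n + 1) → Fin p)) (r : ℕ) : Finset (Fin n → Fin p) :=
  {u | r < fiberCard H u}

lemma fiberCard_le (H : Finset (Fin (n + 1) → Fin p)) (u : Fin n → Fin p) :
    fiberCard H u ≤ p := by
  calc fiberCard H u ≤ #(univ : Finset (Fin p)) := by
        refine card_le_card_of_injOn (· (Fin.last n)) (fun _ _ => mem_coe.2 (mem_univ _)) ?_
        intro g hg h hh hlast
        simp only [mem_coe, mem_filter] at hg hh
        exact Fin.eq_of_init_eq_of_last_eq (hg.2.trans hh.2.symm) hlast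
    _ = p := by simp

lemma sum_card_layer (H : Finset (Fin (n + 1) → Fin p)) :
    ∑ r ∈ range (p + 1), #(layer H r) = #H := by
  simp only [layer, sum_range_card_filter_lt,
    fun u => min_eq_left ((fiberCard_le H u).trans p.le_succ)]
  exact (card_eq_sum_card_fiberwise fun _ _ => mem_univ _).symm

lemma layer_zero (H : Finset (Fin (n + 1) → Fin p)) : layer H 0 = H.image Fin.init := by
  ext u
  simp [layer, fiberCard, card_pos, Finset.Nonempty]

lemma layer_subset_image_init (H : Finset (Fin (n + 1) → Fin p)) (r : ℕ) :
    layer H r ⊆ H.image Fin.init := by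
  rw [← layer_zero]
  intro u hu
  simp only [layer, mem_filter, mem_univ, true_and] at hu ⊢
  omega

lemma numEdges_last (H : Finset (Fin (n + 1) → Fin p)) :
    numEdges H (Fin.last n) = #(H.image Fin.init) := by
  have hinj : Function.Injective fun (g : {k // k ≠ Fin.last n} → Fin p) (k : Fin n) =>
      g ⟨k.castSucc, (Fin.castSucc_lt_last k).ne⟩ := by
    intro g g' hgg'
    funext ⟨k, hk⟩
    induction k using Fin.lastCases with
    | last => exact absurd rfl hk
    | cast k => exact congrFun hgg' k
  rw [numEdges_eq_card_image_restrict, ← card_image_of_injective _ hinj, image_image]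
  rfl

lemma numEdges_castSucc (H : Finset (Fin (n + 1) → Fin p)) (j : Fin n) :
    numEdges H j.castSucc =
      #(H.image fun h => (Subtype.restrict (· ≠ j) (Fin.init h), h (Fin.last n))) := by
  have hinj : Function.Injective fun (g : {k // k ≠ j.castSucc} → Fin p) =>
      ((fun k => g ⟨k.1.castSucc, by simpa [Fin.castSucc_inj] using k.2⟩ :
          {k // k ≠ j} → Fin p), g ⟨Fin.last n, (Fin.castSucc_lt_last j).ne'⟩) := by
    intro g g' hgg'
    funext ⟨k, hk⟩
    induction k using Fin.lastCases with
    | last => exact congrArg Prod.snd hgg'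
    | cast k => exact congrFun (congrArg Prod.fst hgg') ⟨k, fun h => hk (h ▸ rfl)⟩
  rw [numEdges_eq_card_image_restrict, ← card_image_of_injective _ hinj, image_image]
  rfl

/-- The fibre of `u` injects into the fibre of `π u` in the image, so a pattern `y` lies in
the images of at most as many layers as it has extensions. -/
lemma sum_card_image_layer_le {β : Type*} [Fintype β] [DecidableEq β]
    (H : Finset (Fin (n + 1) → Fin p)) (π : (Fin n → Fin p) → β) :
    ∑ r ∈ range (p + 1), #((layer H r).image π) ≤
      #(H.image fun h => (π (Fin.init h), h (Fin.last n))) := by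
  set A := H.image fun h => (π (Fin.init h), h (Fin.last n))
  set c : β → ℕ := fun y => #{q ∈ A | q.1 = y}
  have hfiber : ∀ u, fiberCard H u ≤ c (π u) := by
    intro u
    refine card_le_card_of_injOn (fun h => (π (Fin.init h), h (Fin.last n))) ?_ ?_
    · intro h hh
      simp only [mem_coe, mem_filter] at hh ⊢
      exact ⟨mem_image_of_mem _ hh.1, by rw [hh.2]⟩
    · intro g hg h hh hgh
      simp only [mem_coe, mem_filter] at hg hh
      exact Fin.eq_of_init_eq_of_last_eq (hg.2.trans hh.2.symm) (congrArg Prod.snd hgh)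
  calc ∑ r ∈ range (p + 1), #((layer H r).image π)
      ≤ ∑ r ∈ range (p + 1), #{y | r < c y} := by
        refine sum_le_sum fun r _ => card_le_card (image_subset_iff.2 fun u hu => ?_)
        exact mem_filter.2 ⟨mem_univ _, (mem_filter.1 hu).2.trans_le (hfiber u)⟩
    _ = ∑ y, min (c y) (p + 1) := sum_range_card_filter_lt _ _ _
    _ ≤ ∑ y, c y := sum_le_sum fun _ _ => min_le_left _ _
    _ = #A := (card_eq_sum_card_fiberwise fun _ _ => mem_univ _).symm

lemma sum_numEdges_layer_le (H : Finset (Fin (n + 1) → Fin p)) (j : Fin n) :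
    ∑ r ∈ range (p + 1), numEdges (layer H r) j ≤ numEdges H j.castSucc := by
  rw [numEdges_castSucc]
  exact sum_card_image_layer_le H _

lemma edgeExcess_le_sum_layer (H : Finset (Fin (n + 1) → Fin p)) :
    edgeExcess H ≤ ∑ r ∈ range (p + 1), edgeExcess (layer H r) +
      ∑ r ∈ range p, (#(layer H (r + 1)) : ℚ) := by
  have hcard : (#H : ℚ) = ∑ r ∈ range (p + 1), (#(layer H r) : ℚ) := by
    exact_mod_cast (sum_card_layer H).symm
  have hlast :
      (#H : ℚ) - numEdges H (Fin.last n) = ∑ r ∈ range p, (#(layer H (r + 1)) : ℚ) := by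
    rw [numEdges_last, ← layer_zero, hcard, sum_range_succ']
    ring
  have hcastSucc : ∀ j : Fin n, (#H : ℚ) - numEdges H j.castSucc ≤
      ∑ r ∈ range (p + 1), ((#(layer H r) : ℚ) - numEdges (layer H r) j) := by
    intro j
    have : ∑ r ∈ range (p + 1), (numEdges (layer H r) j : ℚ) ≤ numEdges H j.castSucc := by
      exact_mod_cast sum_numEdges_layer_le H j
    rw [sum_sub_distrib, ← hcard]
    linarith
  rw [edgeExcess, Fin.sum_univ_castSucc, hlast]
  gcongr
  calc ∑ j : Fin n, ((#H : ℚ) - numEdges H j.castSucc)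
      ≤ ∑ j : Fin n, ∑ r ∈ range (p + 1), ((#(layer H r) : ℚ) - numEdges (layer H r) j) :=
        sum_le_sum fun j _ => hcastSucc j
    _ = ∑ r ∈ range (p + 1), edgeExcess (layer H r) := sum_comm

end Layers

section ExponentialDimension

variable {n p k : ℕ}

lemma EShatters.le_card {H : Finset (Fin n → Fin p)} (h : EShatters H k) : k ≤ #H := by
  obtain ⟨S, hS⟩ := h
  calc k ≤ 2 ^ k := Nat.lt_two_pow_self.le
    _ ≤ #(projF H S) := hS
    _ ≤ #H := card_image_le

lemma EShatters.mono {G H : Finset (Fin n → Fin p)} (hGH : G ⊆ H) (h : EShatters G k) :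
    EShatters H k :=
  let ⟨S, hS⟩ := h
  ⟨S, hS.trans (card_le_card (image_subset_image hGH))⟩

lemma bddAbove_eshatters (H : Finset (Fin n → Fin p)) : BddAbove {k | EShatters H k} :=
  ⟨#H, fun _ hk => EShatters.le_card hk⟩

lemma EShatters.le_dE {H : Finset (Fin n → Fin p)} (h : EShatters H k) : k ≤ dE H :=
  le_csSup (bddAbove_eshatters H) h

lemma eshatters_dE {H : Finset (Fin n → Fin p)} (hH : H.Nonempty) : EShatters H (dE H) := by
  have hzero : EShatters H 0 := ⟨Fin.elim0, by simpa [projF] using hH⟩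
  exact Nat.sSup_mem ⟨0, hzero⟩ (bddAbove_eshatters H)

lemma projF_image_init (H : Finset (Fin (n + 1) → Fin p)) (S : Fin k → Fin n) :
    projF (H.image Fin.init) S = projF H (Fin.castSucc ∘ S) := by
  rw [projF, projF, image_image]
  rfl

lemma EShatters.of_layer {H : Finset (Fin (n + 1) → Fin p)} {r : ℕ}
    (h : EShatters (layer H r) k) : EShatters H k := by
  obtain ⟨S, hS⟩ := h.mono (layer_subset_image_init H r)
  exact ⟨Fin.castSucc ∘ S, by rwa [← projF_image_init]⟩

/-- Every pattern on `S` of a member of `layer H (r + 1)` has at least two extensions by the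
last coordinate in the projection of `H`. -/
lemma EShatters.succ_of_layer_succ {H : Finset (Fin (n + 1) → Fin p)} {r : ℕ}
    (h : EShatters (layer H (r + 1)) k) : EShatters H (k + 1) := by
  obtain ⟨S, hS⟩ := h
  set S' : Fin (k + 1) → Fin (n + 1) := Fin.snoc (Fin.castSucc ∘ S) (Fin.last n)
  set Q := projF (layer H (r + 1)) S
  set W := {w ∈ projF H S' | (Fin.init w : Fin k → Fin p) ∈ Q}
  refine ⟨S', ?_⟩
  have hfibres : ∀ q ∈ Q, 2 ≤ #{w ∈ W | Fin.init w = q} := by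
    intro q hq
    obtain ⟨u, hu, rfl⟩ := mem_image.1 hq
    have hmult : 1 < fiberCard H u := (Nat.le_add_left 1 r).trans_lt (mem_filter.1 hu).2
    obtain ⟨g, hg, h, hh, hgh⟩ := one_lt_card.1 hmult
    rw [mem_filter] at hg hh
    have hinit : ∀ f : Fin (n + 1) → Fin p,
        Fin.init (fun i => f (S' i)) = fun i => Fin.init f (S i) :=
      fun f => funext fun i => by simp [S', Fin.init]
    have hmem : ∀ f ∈ H, Fin.init f = u →
        (fun i => f (S' i)) ∈ {w ∈ W | Fin.init w = fun i => u (S i)} := by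
      intro f hf hfu
      simp only [W, mem_filter, hinit, hfu, and_true]
      exact ⟨mem_image_of_mem _ hf, hq⟩
    refine one_lt_card.2 ⟨_, hmem g hg.1 hg.2, _, hmem h hh.1 hh.2, fun hproj => hgh ?_⟩
    refine Fin.eq_of_init_eq_of_last_eq (hg.2.trans hh.2.symm) ?_
    simpa [S'] using congrFun hproj (Fin.last k)
  calc 2 ^ (k + 1) = 2 * 2 ^ k := pow_succ' 2 k
    _ ≤ 2 * #Q := Nat.mul_le_mul_left 2 hS
    _ ≤ #W :=
        mul_card_image_le_card_of_maps_to (fun w hw => (mem_filter.1 hw).2) 2 hfibres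
    _ ≤ #(projF H S') := card_filter_le _ _

lemma dE_layer_le (H : Finset (Fin (n + 1) → Fin p)) (r : ℕ) : dE (layer H r) ≤ dE H := by
  rcases (layer H r).eq_empty_or_nonempty with hempty | hne
  · simp [hempty, dE, EShatters, projF]
  · exact (eshatters_dE hne).of_layer.le_dE

lemma dE_layer_succ_lt (H : Finset (Fin (n + 1) → Fin p)) (r : ℕ)
    (hne : (layer H (r + 1)).Nonempty) : dE (layer H (r + 1)) < dE H :=
  (eshatters_dE hne).succ_of_layer_succ.le_dE

end ExponentialDimension

theorem edgeExcess_le_dE_mul_card {p : ℕ} :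
    ∀ {n : ℕ} (H : Finset (Fin n → Fin p)), edgeExcess H ≤ dE H * #H
  | 0, H => by rw [edgeExcess, Fin.sum_univ_zero]; positivity
  | n + 1, H => by
    have hbound : ∀ r, edgeExcess (layer H r) ≤ dE (layer H r) * #(layer H r) :=
      fun r => edgeExcess_le_dE_mul_card (layer H r)
    have hzero : edgeExcess (layer H 0) ≤ dE H * #(layer H 0) :=
      (hbound 0).trans (by gcongr; exact_mod_cast dE_layer_le H 0)
    have hsucc : ∀ r, edgeExcess (layer H (r + 1)) + #(layer H (r + 1)) ≤
        dE H * #(layer H (r + 1)) := by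
      intro r
      rcases (layer H (r + 1)).eq_empty_or_nonempty with hempty | hne
      · simp [hempty, edgeExcess, numEdges]
      · have : (dE (layer H (r + 1)) : ℚ) + 1 ≤ dE H := by
          exact_mod_cast dE_layer_succ_lt H r hne
        nlinarith [hbound (r + 1)]
    calc edgeExcess H
        ≤ ∑ r ∈ range (p + 1), edgeExcess (layer H r) +
            ∑ r ∈ range p, (#(layer H (r + 1)) : ℚ) := edgeExcess_le_sum_layer H
      _ = edgeExcess (layer H 0) +
            ∑ r ∈ range p, (edgeExcess (layer H (r + 1)) + #(layer H (r + 1))) := by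
          rw [sum_range_succ', sum_add_distrib]
          ring
      _ ≤ dE H * #(layer H 0) + ∑ r ∈ range p, (dE H : ℚ) * #(layer H (r + 1)) :=
          add_le_add hzero (sum_le_sum fun r _ => hsucc r)
      _ = dE H * #H := by
          rw [← sum_card_layer H, Nat.cast_sum, mul_sum, sum_range_succ']
          ring

lemma avd'_le_dE {n p : ℕ} (H : Finset (Fin n → Fin p)) : avd' H ≤ dE H :=
  div_le_of_le_mul₀ (Nat.cast_nonneg _) (Nat.cast_nonneg _) (edgeExcess_le_dE_mul_card H)

/-- The average degree of the one-inclusion graph is at most four times the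
exponential dimension. -/
theorem avd_le_four_dE {n p : ℕ} (H : Finset (Fin n → Fin p)) :
    avd H ≤ 4 * (dE H : ℚ) := by
  calc avd H ≤ 2 * avd' H := avd_le_two_mul_avd' H
    _ ≤ 2 * dE H := by gcongr; exact avd'_le_dE H
    _ ≤ 4 * dE H := by linarith [(Nat.cast_nonneg (dE H) : (0 : ℚ) ≤ dE H)]
end

section
/- Let H ⊆ [p]^n with Natarajan dimension d_N and finite exponential dimension d_E, where p ≥ 2. Then d_E ≤ 5·d_N·log₂(p). -/
/-!
A projection of `H` to `d_E` coordinates has at least `2^{d_E}` patterns but does not N-shatter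
`d_N + 1` coordinates. The Haussler–Long lemma bounds such a class by
`Σ_{i ≤ d_N} C(d_E, i) C(p, 2)^i ≤ (p² e d_E / (2 d_N))^{d_N}`: by induction on the number of
coordinates, the class is at most its projection off the last coordinate plus, for each
unordered pair `{a, b}` of values, the prefixes extendable by both `a` and `b`, and those prefixes
cannot N-shatter `d_N` coordinates. Comparing logarithms with `2^{d_E}`, via `log x ≤ x - 1` at
`x = d_E / (5 d_N)`, gives the factor `5`.
-/

open Finset

/-- The Natarajan dimension of `H ⊆ [p]^n`: the largest `m` such that some `m` coordinates
are N-shattered, i.e. there are `f, g` disagreeing everywhere all of whose mixed patterns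
appear in the projection. -/
noncomputable def natDim {n p : ℕ} (H : Finset (Fin n → Fin p)) : ℕ :=
  sSup {m | ∃ S : Fin m → Fin n, ∃ f g : Fin m → Fin p, (∀ j, f j ≠ g j) ∧
    ∀ b : Fin m → Bool, (fun j => if b j then f j else g j) ∈ projF H S}

open Real

def NatarajanShatters {ι α : Type*} (F : Finset (ι → α)) (t : ℕ) : Prop :=
  ∃ S : Fin t → ι, ∃ f g : Fin t → α, (∀ j, f j ≠ g j) ∧
    ∀ b : Fin t → Bool, ∃ h ∈ F, ∀ j, h (S j) = if b j then f j else g j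

namespace NatarajanShatters

variable {ι κ α : Type*} {F : Finset (ι → α)} {t : ℕ}

lemma of_nonempty (hF : F.Nonempty) : NatarajanShatters F 0 := by
  obtain ⟨h, hh⟩ := hF
  exact ⟨Fin.elim0, Fin.elim0, Fin.elim0, fun j => j.elim0, fun _ => ⟨h, hh, fun j => j.elim0⟩⟩

lemma of_image_comp [DecidableEq (κ → α)] {σ : κ → ι}
    (h : NatarajanShatters (F.image (· ∘ σ)) t) : NatarajanShatters F t := by
  obtain ⟨S, f, g, hfg, hb⟩ := h
  refine ⟨σ ∘ S, f, g, hfg, fun b => ?_⟩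
  obtain ⟨_, hx, hxb⟩ := hb b
  obtain ⟨h, hh, rfl⟩ := mem_image.1 hx
  exact ⟨h, hh, hxb⟩

lemma two_pow_le_card (h : NatarajanShatters F t) : 2 ^ t ≤ #F := by
  obtain ⟨S, f, g, hfg, hb⟩ := h
  choose w hwF hw using hb
  calc 2 ^ t = #(univ : Finset (Fin t → Bool)) := by simp
    _ ≤ #F := card_le_card_of_injOn w (fun b _ => hwF b) fun b _ b' _ hbb' => funext fun j => by
        have := (hw b j).symm.trans (hbb' ▸ hw b' j)
        cases hb : b j <;> cases hb' : b' j <;> simp_all [hfg j, (hfg j).symm]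

lemma succ_of_snoc_mem {m : ℕ} {F : Finset (Fin (m + 1) → α)} {G : Finset (Fin m → α)} {a b : α}
    (hab : a ≠ b) (hG : ∀ g ∈ G, Fin.snoc g a ∈ F ∧ Fin.snoc g b ∈ F)
    (h : NatarajanShatters G t) : NatarajanShatters F (t + 1) := by
  obtain ⟨S, f, g, hfg, hb⟩ := h
  refine ⟨Fin.snoc (Fin.castSucc ∘ S) (Fin.last m), Fin.snoc f a, Fin.snoc g b,
    Fin.lastCases (by simpa using hab) (by simpa using hfg), fun c => ?_⟩
  obtain ⟨x, hx, hxc⟩ := hb (fun j => c j.castSucc)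
  refine ⟨Fin.snoc x (if c (Fin.last t) then a else b), by split <;> simp [hG x hx], ?_⟩
  exact Fin.lastCases (by simp) (by simpa using hxc)

end NatarajanShatters

section HausslerLong

variable {α : Type*} [DecidableEq α] [Fintype α] {m : ℕ}

lemma card_eq_sum_card_snoc_mem (F : Finset (Fin (m + 1) → α)) :
    #F = ∑ g ∈ F.image Fin.init, #{v | Fin.snoc g v ∈ F} := by
  rw [card_eq_sum_card_fiberwise fun h hh => mem_image_of_mem Fin.init hh]
  refine sum_congr rfl fun g _ => card_nbij (· (Fin.last m)) ?_ ?_ ?_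
  · rintro h hh
    obtain ⟨hF, rfl⟩ := mem_filter.1 hh
    simpa [Fin.snoc_init_self] using hF
  · rintro h hh h' hh' hhh'
    obtain ⟨-, rfl⟩ := mem_filter.1 (mem_coe.1 hh)
    rw [← Fin.snoc_init_self h, ← Fin.snoc_init_self h', (mem_filter.1 (mem_coe.1 hh')).2]
    exact congrArg _ hhh'
  · intro v hv
    exact ⟨Fin.snoc g v, by simpa [Fin.init_snoc] using hv, Fin.snoc_last _ _⟩

lemma le_one_add_choose_two : ∀ s : ℕ, s ≤ 1 + s.choose 2
  | 0 => zero_le_one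
  | s + 1 => by rw [Nat.choose_succ_succ, Nat.choose_one_right]; omega

lemma card_le_card_image_init_add_sum_pairs (F : Finset (Fin (m + 1) → α)) :
    #F ≤ #(F.image Fin.init) + ∑ e ∈ powersetCard 2 (univ : Finset α),
      #{g ∈ F.image Fin.init | ∀ v ∈ e, Fin.snoc g v ∈ F} := by
  have hpairs (g : Fin m → α) :
      {e ∈ powersetCard 2 (univ : Finset α) | ∀ v ∈ e, Fin.snoc g v ∈ F}
        = powersetCard 2 {v | Fin.snoc g v ∈ F} := by
    ext e; simp [mem_powersetCard, subset_iff, and_comm]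
  calc #F = ∑ g ∈ F.image Fin.init, #{v | Fin.snoc g v ∈ F} := card_eq_sum_card_snoc_mem F
    _ ≤ ∑ g ∈ F.image Fin.init, (1 + #(powersetCard 2 {v | Fin.snoc g v ∈ F})) := by
      gcongr with g; rw [card_powersetCard]; exact le_one_add_choose_two _
    _ = _ := by
      rw [sum_add_distrib, card_eq_sum_ones (F.image Fin.init)]
      simp only [← hpairs]
      exact congrArg _ (sum_card_bipartiteAbove_eq_sum_card_bipartiteBelow _)

lemma sum_range_choose_succ_mul_pow (q t : ℕ) :
    ∑ i ∈ range (t + 1), (m + 1).choose i * q ^ i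
      = ∑ i ∈ range (t + 1), m.choose i * q ^ i + q * ∑ i ∈ range t, m.choose i * q ^ i := by
  have hshift (i : ℕ) : m.choose i * q ^ (i + 1) = q * (m.choose i * q ^ i) := by ring
  rw [sum_range_succ' _ t, sum_range_succ' (fun i => m.choose i * q ^ i) t, mul_sum]
  simp only [Nat.choose_succ_succ, add_mul, sum_add_distrib, hshift, Nat.choose_zero_right]
  ring

theorem card_le_sum_choose_mul_pow_of_not_natarajanShatters :
    ∀ {m : ℕ} (F : Finset (Fin m → α)) {t : ℕ}, ¬ NatarajanShatters F t →
      #F ≤ ∑ i ∈ range t, m.choose i * (Fintype.card α).choose 2 ^ i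
  | _, F, 0, hF => by simpa using mt NatarajanShatters.of_nonempty hF
  | 0, F, t + 1, _ => by
    rw [sum_range_succ']
    exact (card_le_one.2 fun _ _ _ _ => Subsingleton.elim _ _).trans (by simp)
  | m + 1, F, t + 1, hF => by
    set q := (Fintype.card α).choose 2
    have hinit : #(F.image Fin.init) ≤ ∑ i ∈ range (t + 1), m.choose i * q ^ i :=
      card_le_sum_choose_mul_pow_of_not_natarajanShatters _
        fun h => hF (NatarajanShatters.of_image_comp h)
    have hpair : ∀ e ∈ powersetCard 2 (univ : Finset α),
        #{g ∈ F.image Fin.init | ∀ v ∈ e, Fin.snoc g v ∈ F}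
          ≤ ∑ i ∈ range t, m.choose i * q ^ i := by
      intro e he
      obtain ⟨a, b, hab, rfl⟩ := card_eq_two.1 (mem_powersetCard.1 he).2
      refine card_le_sum_choose_mul_pow_of_not_natarajanShatters _ fun h => hF ?_
      refine NatarajanShatters.succ_of_snoc_mem hab (fun g hg => ?_) h
      have := (mem_filter.1 hg).2
      exact ⟨this a (by simp), this b (by simp)⟩
    calc #F ≤ #(F.image Fin.init) + ∑ e ∈ powersetCard 2 (univ : Finset α),
          #{g ∈ F.image Fin.init | ∀ v ∈ e, Fin.snoc g v ∈ F} :=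
          card_le_card_image_init_add_sum_pairs F
      _ ≤ ∑ i ∈ range (t + 1), m.choose i * q ^ i + q * ∑ i ∈ range t, m.choose i * q ^ i := by
          grw [hinit, sum_le_sum hpair, sum_const, card_powersetCard, card_univ, smul_eq_mul]
      _ = _ := (sum_range_choose_succ_mul_pow q t).symm

end HausslerLong

lemma sum_range_choose_le_exp_one_mul_div_pow {k d : ℕ} (hd : 0 < d) (hdk : d ≤ k) :
    ∑ i ∈ range (d + 1), (k.choose i : ℝ) ≤ (exp 1 * k / d) ^ d := by
  set x : ℝ := d / k
  have hk : (0 : ℝ) < k := by exact_mod_cast hd.trans_le hdk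
  have hx0 : 0 < x := by positivity
  have hx1 : x ≤ 1 := div_le_one_of_le₀ (by exact_mod_cast hdk) hk.le
  have hbound : (∑ i ∈ range (d + 1), (k.choose i : ℝ)) * x ^ d ≤ exp d :=
    calc (∑ i ∈ range (d + 1), (k.choose i : ℝ)) * x ^ d
        ≤ ∑ i ∈ range (d + 1), (k.choose i : ℝ) * x ^ i := by
          rw [sum_mul]
          refine sum_le_sum fun i hi => mul_le_mul_of_nonneg_left ?_ (by positivity)
          exact pow_le_pow_of_le_one hx0.le hx1 (Nat.lt_succ_iff.1 (mem_range.1 hi))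
      _ ≤ ∑ i ∈ range (k + 1), (k.choose i : ℝ) * x ^ i :=
          sum_le_sum_of_subset_of_nonneg (range_subset_range.2 (by omega))
            fun _ _ _ => by positivity
      _ = (x + 1) ^ k := by rw [add_pow]; simp [mul_comm]
      _ ≤ exp x ^ k := by gcongr; exact add_one_le_exp x
      _ = exp d := by rw [← exp_nat_mul]; congr 1; exact mul_div_cancel₀ _ hk.ne'
  calc ∑ i ∈ range (d + 1), (k.choose i : ℝ) ≤ exp d / x ^ d := by
        rwa [le_div_iff₀ (by positivity)]
    _ = (exp 1 * k / d) ^ d := by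
        rw [← exp_one_pow, div_pow, div_pow, mul_pow, div_div_eq_mul_div, mul_div_assoc]

lemma sum_range_choose_mul_pow_le {k d : ℕ} {q : ℝ} (hq : 1 ≤ q) (hd : 0 < d) (hdk : d ≤ k) :
    ∑ i ∈ range (d + 1), (k.choose i : ℝ) * q ^ i ≤ (q * exp 1 * k / d) ^ d :=
  calc ∑ i ∈ range (d + 1), (k.choose i : ℝ) * q ^ i
      ≤ ∑ i ∈ range (d + 1), (k.choose i : ℝ) * q ^ d := by
        gcongr with i hi
        exact Nat.lt_succ_iff.1 (mem_range.1 hi)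
    _ ≤ q ^ d * (exp 1 * k / d) ^ d := by
        rw [← sum_mul, mul_comm]
        gcongr
        exact sum_range_choose_le_exp_one_mul_div_pow hd hdk
    _ = (q * exp 1 * k / d) ^ d := by rw [← mul_pow, mul_div_assoc, mul_div_assoc, mul_assoc]

lemma le_five_mul_logb_of_two_pow_le {k d : ℕ} {p : ℝ} (hp : 2 ≤ p) (hd : 0 < d)
    (h : (2 : ℝ) ^ k ≤ (p ^ 2 * exp 1 * k / (2 * d)) ^ d) : (k : ℝ) ≤ 5 * d * logb 2 p := by
  by_contra! hk
  have hlog2 : 0.6931471803 < log 2 := log_two_gt_d9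
  have hlog2p : log 2 ≤ log p := log_le_log two_pos hp
  have hd0 : (0 : ℝ) < d := by exact_mod_cast hd
  have hk0 : (0 : ℝ) < k :=
    (mul_nonneg (by positivity) (logb_nonneg one_lt_two (by linarith))).trans_lt hk
  have hkd : 5 * (d * log p) < k * log 2 :=
    calc 5 * (d * log p) = 5 * d * logb 2 p * log 2 := by
          rw [logb]; field_simp [(log_pos one_lt_two).ne']
      _ < k * log 2 := mul_lt_mul_of_pos_right hk (log_pos one_lt_two)
  have hlog : k * log 2 ≤ d * (2 * log p + 1 + log k - log 2 - log d) := by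
    have := log_le_log (by positivity) h
    rw [log_pow, log_pow, log_div (by positivity) (by positivity), log_mul (by positivity)
      (by positivity), log_mul (by positivity) (by positivity), log_mul two_ne_zero
      (by positivity), log_pow, log_exp] at this
    push_cast at this
    linarith
  have hratio : d * (log k - log d) ≤ d * log 5 + k / 5 - d := by
    have := log_le_sub_one_of_pos (show 0 < k / (5 * d : ℝ) by positivity)
    rw [log_div hk0.ne' (by positivity), log_mul (by norm_num) hd0.ne'] at this
    have hcancel : d * (k / (5 * d) : ℝ) = k / 5 := by field_simp
    nlinarith
  have hfive : log 5 - log 2 < 1 := by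
    rw [← log_div (by norm_num) two_ne_zero, log_lt_iff_lt_exp (by norm_num)]
    linarith [exp_one_gt_d9]
  have hdk : 5 * d < (k : ℝ) := by
    refine lt_of_mul_lt_mul_right ?_ (log_pos one_lt_two).le
    nlinarith [mul_le_mul_of_nonneg_left hlog2p hd0.le]
  nlinarith [mul_lt_mul_of_pos_left hlog2 hk0, mul_lt_mul_of_pos_left hfive hd0]

lemma le_five_mul_logb_of_two_pow_le_sum {k d p : ℕ} (hp : 2 ≤ p)
    (h : 2 ^ k ≤ ∑ i ∈ range (d + 1), k.choose i * p.choose 2 ^ i) :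
    (k : ℝ) ≤ 5 * d * logb 2 p := by
  have hp' : (2 : ℝ) ≤ p := by exact_mod_cast hp
  rcases Nat.eq_zero_or_pos d with rfl | hd
  · obtain rfl : k = 0 := by
      by_contra hk
      simp only [zero_add, sum_range_one, Nat.choose_zero_right, pow_zero, mul_one] at h
      exact (Nat.one_lt_two_pow hk).not_ge h
    simp
  rcases le_or_gt k d with hkd | hdk
  · have hlogb : 1 ≤ logb 2 (p : ℝ) := by
      rw [← logb_self_eq_one one_lt_two]
      exact logb_le_logb_of_le one_lt_two two_pos hp'
    calc (k : ℝ) ≤ 5 * d * 1 := by norm_cast; omega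
      _ ≤ 5 * d * logb 2 p := by gcongr
  refine le_five_mul_logb_of_two_pow_le hp' hd ?_
  have hq : (p.choose 2 : ℝ) ≤ p ^ 2 / 2 := by rw [Nat.cast_choose_two]; nlinarith
  calc (2 : ℝ) ^ k ≤ ∑ i ∈ range (d + 1), (k.choose i : ℝ) * (p.choose 2 : ℝ) ^ i := by
        exact_mod_cast h
    _ ≤ (p.choose 2 * exp 1 * k / d) ^ d :=
        sum_range_choose_mul_pow_le (by exact_mod_cast Nat.choose_pos hp) hd hdk.le
    _ ≤ (p ^ 2 / 2 * exp 1 * k / d) ^ d := by gcongr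
    _ = (p ^ 2 * exp 1 * k / (2 * d)) ^ d := by ring

section Dimensions

variable {n p : ℕ} (H : Finset (Fin n → Fin p))

lemma natDim_eq_sSup_natarajanShatters : natDim H = sSup {t | NatarajanShatters H t} := by
  simp only [natDim, NatarajanShatters, projF, mem_image, funext_iff]

lemma not_natarajanShatters_natDim_add_one : ¬ NatarajanShatters H (natDim H + 1) := by
  intro h
  have hbdd : BddAbove {t | NatarajanShatters H t} :=
    ⟨#H, fun t ht => Nat.lt_two_pow_self.le.trans ht.two_pow_le_card⟩
  have := le_csSup hbdd h
  rw [← natDim_eq_sSup_natarajanShatters] at this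
  omega

lemma exists_two_pow_dE_le_card_projF (hH : 0 < dE H) :
    ∃ S : Fin (dE H) → Fin n, 2 ^ dE H ≤ #(projF H S) := by
  have hne : {k | EShatters H k}.Nonempty :=
    Set.nonempty_iff_ne_empty.2 fun he => by simp [dE, he] at hH
  exact Nat.sSup_mem hne
    ⟨#H, fun k ⟨_, hS⟩ => Nat.lt_two_pow_self.le.trans (hS.trans card_image_le)⟩

end Dimensions

/-- For `p ≥ 2`, the exponential dimension is at most `5·d_N·log₂ p`. -/
theorem dE_le_five_natDim_logb {n p : ℕ} (H : Finset (Fin n → Fin p)) (hp : 2 ≤ p) :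
    (dE H : ℝ) ≤ 5 * (natDim H : ℝ) * Real.logb 2 (p : ℝ) := by
  rcases Nat.eq_zero_or_pos (dE H) with h0 | hpos
  · rw [h0, Nat.cast_zero]
    exact mul_nonneg (by positivity)
      (logb_nonneg one_lt_two (by exact_mod_cast hp.trans' one_le_two))
  obtain ⟨S, hS⟩ := exists_two_pow_dE_le_card_projF H hpos
  have hproj : ¬ NatarajanShatters (projF H S) (natDim H + 1) :=
    fun h => not_natarajanShatters_natDim_add_one H h.of_image_comp
  have hHL := card_le_sum_choose_mul_pow_of_not_natarajanShatters _ hproj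
  rw [Fintype.card_fin] at hHL
  exact le_five_mul_logb_of_two_pow_le_sum hp (hS.trans hHL)
end

section
/- Let G be a one-inclusion graph on a finite class H ⊆ Y^{n+1} and σ an orientation of G with maximum out-degree at most M. Define the transductive predictor: given a realizable sample of n labeled points and one unlabeled point, predict the label via σ applied to the corresponding edge. Then for every fixed realizable y' ∈ H, the fraction of indices i ∈ [n+1] on which the predictor trained on y' minus coordinate i errs at coordinate i equals outdeg(y'; σ)/(n+1) ≤ M/(n+1). -/
open Finset
open scoped Classical

/-- For an orientation `σ` of the one-inclusion graph of a finite
`H ⊆ Y^{n+1}` with maximum out-degree at most `M`, and any vertex `y' ∈ H`, the fraction of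
indices `i` on which the transductive predictor (predicting via `σ` on the edge in
direction `i` through `y'`) errs equals `outdeg(y'; σ)/(n+1)`, which is at most `M/(n+1)`. -/
theorem leave_one_out_error_eq_outdeg {Y : Type*} {n : ℕ} (H : Set (Fin (n + 1) → Y))
    (hfin : H.Finite) (o : OIOrientation H) (M : ℕ) (hM : ∀ v ∈ H, outdeg o v ≤ M)
    (y' : Fin (n + 1) → Y) (hy' : y' ∈ H) :
    (((Finset.univ.filter (fun i : Fin (n + 1) => (o.σ i y') i ≠ y' i)).card : ℚ) / (n + 1)
        = (outdeg o y' : ℚ) / (n + 1)) ∧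
      (outdeg o y' : ℚ) / (n + 1) ≤ (M : ℚ) / (n + 1) := by
  constructor
  · congr 2
    unfold outdeg
    congr 1
    apply Finset.filter_congr
    intro i _
    constructor
    · intro h he; exact h (by rw [he])
    · intro h he
      apply h
      funext j
      by_cases hj : j = i
      · subst hj; exact he
      · exact o.agree i y' hy' j hj
  · apply div_le_div_of_nonneg_right _ (by positivity)
    exact_mod_cast hM y' hy'
end

section
/- (List learner coverage) Let H ⊆ Y^X with DS dimension d < ∞ and let t ∈ ℕ. Suppose A is a learner such that for every H-realizable sample of size d+1, at least one leave-one-out prediction is correct (in the sense of Claim: there is i with A(S_{-i})(x_i) = y_i). For a sample S of size n = d+t, define the menu μ_S(x) as the set of predictions A(T)(x) over all size-d subsamples T of S. Then for every H-realizable sample S' of size n+1, the number of indices i ∈ [n+1] with y'_i ∈ μ_{S'_{-i}}(x'_i) is at least t+1. -/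
open Finset
open scoped Classical

/-- List learner coverage: Let `H ⊆ Y^X` and suppose the learner `A`
(mapping samples of size `d` to hypotheses) satisfies: for every `H`-realizable sample of
size `d+1` there is an index whose example is correctly predicted by `A` trained on the
remaining `d` examples. For a sample `S` of size `n = d + t`, the menu `μ_S(x)` is the set
of predictions `A(T)(x)` over all size-`d` subsamples `T` of `S`. Then for every
`H`-realizable sample `s'` of size `n+1`, at least `t+1` indices `i` satisfy
`y'_i ∈ μ_{S'_{-i}}(x'_i)`. -/
theorem list_learner_coverage {X Y : Type*} (H : Set (X → Y)) (d t : ℕ)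
    (A : (Fin d → X × Y) → (X → Y))
    (hA : ∀ s : Fin (d + 1) → X × Y, (∃ h ∈ H, ∀ i, h (s i).1 = (s i).2) →
      ∃ i : Fin (d + 1), A (s ∘ i.succAbove) (s i).1 = (s i).2)
    (s' : Fin (d + t + 1) → X × Y)
    (hs' : ∃ h ∈ H, ∀ i, h (s' i).1 = (s' i).2) :
    t + 1 ≤ (Finset.univ.filter (fun i : Fin (d + t + 1) =>
      ∃ g : Fin d → Fin (d + t), StrictMono g ∧
        A ((s' ∘ i.succAbove) ∘ g) (s' i).1 = (s' i).2)).card := by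
  set G := (Finset.univ.filter (fun i : Fin (d + t + 1) =>
      ∃ g : Fin d → Fin (d + t), StrictMono g ∧
        A ((s' ∘ i.succAbove) ∘ g) (s' i).1 = (s' i).2)) with hG
  by_contra hlt
  push_neg at hlt
  have hGle : G.card ≤ t := Nat.lt_succ_iff.mp hlt
  have hcompl : d + 1 ≤ Gᶜ.card := by
    have := Finset.card_compl G
    simp only [Fintype.card_fin] at this
    omega
  obtain ⟨T, hTsub, hTcard⟩ := Finset.exists_subset_card_eq hcompl
  let e : Fin (d + 1) ↪o Fin (d + t + 1) := T.orderEmbOfFin hTcard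
  have heT : ∀ k, e k ∈ T := fun k => T.orderEmbOfFin_mem hTcard k
  obtain ⟨h, hH, hh⟩ := hs'
  obtain ⟨j, hj⟩ := hA (s' ∘ e) ⟨h, hH, fun i => hh (e i)⟩
  set i : Fin (d + t + 1) := e j with hi
  -- i is not good
  have hiG : i ∉ G := by
    have := hTsub (heT j)
    simpa using this
  apply hiG
  rw [hG, Finset.mem_filter]
  refine ⟨Finset.mem_univ _, ?_⟩
  -- construct g
  have hne : ∀ k : Fin d, e (j.succAbove k) ≠ i := fun k =>
    e.injective.ne (Fin.succAbove_ne j k)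
  have hex : ∀ k : Fin d, ∃ m : Fin (d + t), i.succAbove m = e (j.succAbove k) :=
    fun k => Fin.exists_succAbove_eq (hne k)
  choose g hg using hex
  refine ⟨g, ?_, ?_⟩
  · intro a b hab
    have : i.succAbove (g a) < i.succAbove (g b) := by
      rw [hg a, hg b]
      exact e.strictMono (Fin.succAbove_lt_succAbove_iff.mpr hab)
    exact (Fin.succAbove_lt_succAbove_iff (p := i)).mp this
  · have hcomp : (s' ∘ i.succAbove) ∘ g = (s' ∘ e) ∘ j.succAbove := by
      funext k
      simp [Function.comp, hg k]
    rw [hcomp]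
    exact hj
end

section
/- (Boosting by plurality via minimax) Let S be a finite set of n labeled examples and let T range over a finite set of 'training multisets'. Suppose there is a distribution P over training multisets such that for every example (x,y) ∈ S, the probability over T ∼ P that h_T(x) ≠ y is at most 1/4, where h_T is a fixed hypothesis determined by T. Let ℓ ≥ 8·ln(n) + 1. Then there exist T_1,…,T_ℓ such that for every (x,y) ∈ S, strictly fewer than ℓ/2 of the hypotheses h_{T_1},…,h_{T_ℓ} err on (x,y); in particular the plurality vote of h_{T_1},…,h_{T_ℓ} correctly classifies every example in S. -/
/-!
Draw `t₁, …, t_ℓ` independently from `P`, i.e. weight a tuple by `∏ j, P (t j)`. For a fixed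
example whose error set has mass `q ≤ 1/4`, the exponential moment `3 ^ #errors` has mean
`(1 + 2q) ^ ℓ ≤ (3/2) ^ ℓ`, so by Markov at least `ℓ/2` errors occur with probability at most
`(3/2) ^ ℓ / √3 ^ ℓ = (√3/2) ^ ℓ ≤ exp (-ℓ/8)` (the base `3` is the optimal Chernoff parameter for
`q = 1/4` and threshold `1/2`). As `n · exp (-ℓ/8) < 1`, a union bound over the `n` examples
leaves a tuple on which every example gets fewer than `ℓ/2` errors.
-/

open Finset Real
open scoped Classical

section ProductWeights

variable {T : Type*} [Fintype T]

lemma sum_prod_mul_pow_card_filter {R : Type*} [CommSemiring R] (P : T → R) (p : T → Prop)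
    [DecidablePred p] (c : R) (ℓ : ℕ) :
    ∑ v : Fin ℓ → T, (∏ j, P (v j)) * c ^ #{j | p (v j)} =
      (∑ t, P t * if p t then c else 1) ^ ℓ := by
  rw [Fintype.sum_pow]
  refine Fintype.sum_congr _ _ fun v => ?_
  rw [prod_mul_distrib, ← prod_filter, prod_const]

lemma sum_prod_le_of_le_two_mul_card_filter (P : T → ℝ) (hP0 : ∀ t, 0 ≤ P t)
    (hP1 : ∑ t, P t = 1) (p : T → Prop) [DecidablePred p] (hp : ∑ t with p t, P t ≤ 1 / 4)
    (ℓ : ℕ) :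
    ∑ v : Fin ℓ → T with ℓ ≤ 2 * #{j | p (v j)}, ∏ j, P (v j) ≤ (√3 / 2) ^ ℓ := by
  have hw0 : ∀ v : Fin ℓ → T, 0 ≤ ∏ j, P (v j) := fun v => prod_nonneg fun j _ => hP0 (v j)
  have hmoment : ∑ t, P t * (if p t then 3 else 1) ≤ 3 / 2 := by
    have : ∑ t, P t * (if p t then 3 else 1) = ∑ t, P t + 2 * ∑ t with p t, P t := by
      rw [sum_filter, mul_sum, ← sum_add_distrib]
      refine sum_congr rfl fun t _ => ?_
      split_ifs <;> ring
    linarith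
  calc ∑ v : Fin ℓ → T with ℓ ≤ 2 * #{j | p (v j)}, ∏ j, P (v j)
      ≤ ∑ v : Fin ℓ → T with ℓ ≤ 2 * #{j | p (v j)},
          (∏ j, P (v j)) * 3 ^ #{j | p (v j)} / √3 ^ ℓ := by
        refine sum_le_sum fun v hv => ?_
        rw [le_div_iff₀ (by positivity)]
        refine mul_le_mul_of_nonneg_left ?_ (hw0 v)
        calc √3 ^ ℓ ≤ √3 ^ (2 * #{j | p (v j)}) :=
              pow_le_pow_right₀ (one_le_sqrt.mpr (by norm_num)) (mem_filter.mp hv).2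
          _ = 3 ^ #{j | p (v j)} := by rw [pow_mul, sq_sqrt (by norm_num)]
    _ ≤ ∑ v : Fin ℓ → T, (∏ j, P (v j)) * 3 ^ #{j | p (v j)} / √3 ^ ℓ :=
        sum_le_sum_of_subset_of_nonneg (filter_subset _ _) fun v _ _ => by
          have := hw0 v; positivity
    _ = (∑ t, P t * if p t then 3 else 1) ^ ℓ / √3 ^ ℓ := by
        rw [← sum_div, sum_prod_mul_pow_card_filter]
    _ ≤ (3 / 2) ^ ℓ / √3 ^ ℓ := by
        gcongr
        exact sum_nonneg fun t _ => mul_nonneg (hP0 t) (by split_ifs <;> norm_num)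
    _ = (√3 / 2) ^ ℓ := by
        rw [← div_pow]
        congr 1
        field_simp
        exact (sq_sqrt (by norm_num)).symm

end ProductWeights

lemma sqrt_three_div_two_le_exp : √3 / 2 ≤ exp (-(1 / 8)) := by
  rw [← pow_le_pow_iff_left₀ (by positivity) (by positivity) (by norm_num : 8 ≠ 0),
    ← exp_nat_mul, div_pow, show √3 ^ 8 = 81 by
      rw [show 8 = 2 * 4 from rfl, pow_mul, sq_sqrt (by norm_num)]; norm_num]
  norm_num [exp_neg]
  rw [le_inv_comm₀ (by positivity) (exp_pos _)]
  norm_num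
  linarith [exp_one_lt_d9]

lemma natCast_mul_exp_lt_one {n ℓ : ℕ} (hℓ : 8 * log n + 1 ≤ ℓ) :
    n * exp (-(ℓ / 8)) < 1 := by
  rcases Nat.eq_zero_or_pos n with rfl | hn
  · simp
  rw [← exp_log (Nat.cast_pos.mpr hn), ← exp_add, exp_lt_one_iff]
  linarith

lemma exists_forall_not_of_card_mul_lt_one {V ι : Type*} [Fintype V] (w : V → ℝ)
    (hw0 : ∀ v, 0 ≤ w v) (hw1 : ∑ v, w v = 1) (S : Finset ι) (bad : ι → V → Prop)
    [∀ e, DecidablePred (bad e)] (δ : ℝ) (hbad : ∀ e ∈ S, ∑ v with bad e v, w v ≤ δ)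
    (hS : #S * δ < 1) : ∃ v, ∀ e ∈ S, ¬ bad e v := by
  by_contra! hcover
  have : (1 : ℝ) ≤ #S * δ := calc
    1 = ∑ v, w v := hw1.symm
    _ ≤ ∑ v, ∑ e ∈ S, if bad e v then w v else 0 := sum_le_sum fun v _ => by
        obtain ⟨e, he, hev⟩ := hcover v
        calc w v = if bad e v then w v else 0 := (if_pos hev).symm
          _ ≤ _ := single_le_sum (f := fun e => if bad e v then w v else 0)
              (fun _ _ => ite_nonneg (hw0 v) le_rfl) he
    _ = ∑ e ∈ S, ∑ v with bad e v, w v := by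
        rw [sum_comm]; simp only [sum_filter]
    _ ≤ #S * δ := by
        simpa using sum_le_sum hbad
  linarith

/-- Boosting by plurality via minimax: Let `S` be a finite set of `n`
labeled examples, `T` a finite type of training multisets, `h t` the hypothesis determined
by `t : T`, and `P` a distribution over `T` such that for each example `(x,y) ∈ S` the
probability over `t ∼ P` that `h t` errs on `(x,y)` is at most `1/4`. If
`ℓ ≥ 8·ln(n) + 1`, then there exist `t_1, …, t_ℓ` such that on every example of `S`,
strictly fewer than `ℓ/2` of the hypotheses `h t_1, …, h t_ℓ` err; in particular the
plurality vote classifies every example of `S` correctly. -/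
theorem boosting_plurality {X Y T : Type*} [Fintype T]
    (S : Finset (X × Y)) (n : ℕ) (hn : S.card = n)
    (h : T → X → Y) (P : T → ℝ) (hP0 : ∀ t, 0 ≤ P t) (hP1 : ∑ t : T, P t = 1)
    (hweak : ∀ e ∈ S, ∑ t ∈ Finset.univ.filter (fun t : T => h t e.1 ≠ e.2), P t ≤ 1 / 4)
    (ℓ : ℕ) (hℓ : 8 * Real.log (n : ℝ) + 1 ≤ (ℓ : ℝ)) :
    ∃ ts : Fin ℓ → T, ∀ e ∈ S,
      2 * (Finset.univ.filter (fun j : Fin ℓ => h (ts j) e.1 ≠ e.2)).card < ℓ := by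
  have hw1 : ∑ ts : Fin ℓ → T, ∏ j, P (ts j) = 1 := by rw [← Fintype.sum_pow, hP1, one_pow]
  have hchernoff : ∀ e ∈ S, ∑ ts : Fin ℓ → T with ℓ ≤ 2 * #{j | h (ts j) e.1 ≠ e.2},
      ∏ j, P (ts j) ≤ exp (-(ℓ / 8)) := fun e he => calc
    _ ≤ (√3 / 2) ^ ℓ := sum_prod_le_of_le_two_mul_card_filter P hP0 hP1 _ (hweak e he) ℓ
    _ ≤ exp (-(1 / 8)) ^ ℓ := by gcongr; exact sqrt_three_div_two_le_exp
    _ = exp (-(ℓ / 8)) := by rw [← exp_nat_mul]; ring_nf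
  obtain ⟨ts, hts⟩ := exists_forall_not_of_card_mul_lt_one _
    (fun ts => prod_nonneg fun j _ => hP0 (ts j)) hw1 S _ _ hchernoff
    (hn ▸ natCast_mul_exp_lt_one hℓ)
  exact ⟨ts, fun e he => not_le.mp (hts e he)⟩
end

section
/- (No empty squares implies Natarajan dimension 1) Let C be a finite pure d-dimensional simplicial complex satisfying replacement, r a proper coloring with d+1 colors, and B = B(C,r) the associated pseudo-cube of words listing the vertices of maximal faces by color. If C contains no square v_0–v_1–v_2–v_3–v_0 (a 4-cycle of distinct vertices in the 1-skeleton) with r(v_0) = r(v_2) and r(v_1) = r(v_3), then the Natarajan dimension of B is at most 1. In particular, if C has no empty squares (4-cycles with both diagonals absent from the 1-skeleton), then the Natarajan dimension of B is at most 1. -/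
open Finset

/-- No squares with alternating colors implies Natarajan dimension ≤ 1:
Let `C` be a nonempty finite simplicial complex on `V`, downward closed, pure of
dimension `d`, satisfying replacement, properly colored by `r : V → Fin (d+1)`, and let
`B` be the associated pseudo-cube of words listing the vertices of maximal faces by
color. If `C` contains no square (4-cycle of distinct vertices in the 1-skeleton)
`v₀–v₁–v₂–v₃–v₀` with `r v₀ = r v₂` and `r v₁ = r v₃`, then no pair of coordinates is
N-shattered by `B`: the Natarajan dimension of `B` is at most 1. -/
theorem no_square_natarajan_le_one {V : Type*} [DecidableEq V] (d : ℕ)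
    (C : Finset (Finset V)) (hne : C.Nonempty)
    (hdc : ∀ f ∈ C, ∀ g ⊆ f, g ∈ C)
    (hpure : ∀ f ∈ C, ∃ m ∈ C, f ⊆ m ∧ m.card = d + 1)
    (hdim : ∀ f ∈ C, f.card ≤ d + 1)
    (hrep : ∀ f ∈ C, ∀ v ∈ f, ∃ u, u ≠ v ∧ insert u (f.erase v) ∈ C)
    (r : V → Fin (d + 1))
    (hr : ∀ u v : V, u ≠ v → ({u, v} : Finset V) ∈ C → r u ≠ r v)
    (B : Set (Fin (d + 1) → V))
    (hB : B = {w : Fin (d + 1) → V |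
      (Finset.univ.image w) ∈ C ∧ ∀ i, r (w i) = i})
    (hsq : ¬ ∃ v₀ v₁ v₂ v₃ : V,
      (v₀ ≠ v₁ ∧ v₀ ≠ v₂ ∧ v₀ ≠ v₃ ∧ v₁ ≠ v₂ ∧ v₁ ≠ v₃ ∧ v₂ ≠ v₃) ∧
      (({v₀, v₁} : Finset V) ∈ C ∧ ({v₁, v₂} : Finset V) ∈ C ∧
        ({v₂, v₃} : Finset V) ∈ C ∧ ({v₃, v₀} : Finset V) ∈ C) ∧
      r v₀ = r v₂ ∧ r v₁ = r v₃) :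
    ∀ (i j : Fin (d + 1)), i ≠ j → ∀ a a' b b' : V, a ≠ a' → b ≠ b' →
      ¬ ((∃ w ∈ B, w i = a ∧ w j = b) ∧ (∃ w ∈ B, w i = a ∧ w j = b') ∧
         (∃ w ∈ B, w i = a' ∧ w j = b) ∧ (∃ w ∈ B, w i = a' ∧ w j = b')) := by
  subst hB
  rintro i j hij a a' b b' ha hb
    ⟨⟨w1, hw1, h1a, h1b⟩, ⟨w2, hw2, h2a, h2b⟩, ⟨w3, hw3, h3a, h3b⟩, ⟨w4, hw4, h4a, h4b⟩⟩
  have edge : ∀ w : Fin (d+1) → V, (Finset.univ.image w) ∈ C ∧ (∀ i, r (w i) = i) →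
      ({w i, w j} : Finset V) ∈ C := by
    intro w hw
    refine hdc _ hw.1 _ ?_
    intro x hx
    simp only [Finset.mem_insert, Finset.mem_singleton] at hx
    rcases hx with h | h <;> subst h <;> exact Finset.mem_image_of_mem w (Finset.mem_univ _)
  have hra : r a = i := by rw [← h1a]; exact hw1.2 i
  have hra' : r a' = i := by rw [← h3a]; exact hw3.2 i
  have hrb : r b = j := by rw [← h1b]; exact hw1.2 j
  have hrb' : r b' = j := by rw [← h2b]; exact hw2.2 j
  have hab : ∀ x y : V, r x = i → r y = j → x ≠ y := by
    intro x y hx hy hxy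
    exact hij (by rw [← hx, hxy, hy])
  have e1 : ({a, b} : Finset V) ∈ C := by
    have := edge w1 hw1; rwa [h1a, h1b] at this
  have e2 : ({a', b} : Finset V) ∈ C := by
    have := edge w3 hw3; rwa [h3a, h3b] at this
  have e3 : ({a', b'} : Finset V) ∈ C := by
    have := edge w4 hw4; rwa [h4a, h4b] at this
  have e4 : ({a, b'} : Finset V) ∈ C := by
    have := edge w2 hw2; rwa [h2a, h2b] at this
  refine hsq ⟨a, b, a', b', ⟨hab a b hra hrb, ha, hab a b' hra hrb',
    (hab a' b hra' hrb).symm, hb, hab a' b' hra' hrb'⟩,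
    ⟨e1, by rwa [Finset.pair_comm], e3, by rwa [Finset.pair_comm]⟩,
    by rw [hra, hra'], by rw [hrb, hrb']⟩
end
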